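/- arXiv:2501.17254 — 3 statements merged into one kernel-verified Lean document; each statement's English description precedes it below -/
import Mathlib

section
/- Let F be a finite-dimensional real inner product space, Ω ⊆ ℝ^N open, Γ : Ω → L(ℝ^N, o(F)) a connection form with skew-adjoint values, and let U : Ω → F be differentiable at x ∈ Ω. Then for every v ∈ ℝ^N one has |⟨U(x), DU(x)[v]⟩| ≤ ‖U(x)‖ · ‖D_Γ U(x)[v]‖; consequently, if U(x) ≠ 0 then the function y ↦ ‖U(y)‖ is differentiable at x and |D‖U‖(x)[v]| ≤ ‖D_Γ U(x)[v]‖ for every v ∈ ℝ^N (the diamagnetic inequality). -/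
open scoped RealInnerProductSpace

/-!
Skew-adjointness of `Γ x v` makes `Γ x v (U x)` orthogonal to `U x`, so adding it to `DU v`
does not change `⟪U x, DU v⟫`, and Cauchy–Schwarz gives the first bound. Away from zeros of `U`,
`D‖U‖(x)[v] = ⟪U x, DU v⟫ / ‖U x‖`, so the second bound is the first one divided by `‖U x‖`.
-/

section

variable {F : Type*} [NormedAddCommGroup F] [InnerProductSpace ℝ F]

theorem inner_self_apply_eq_zero_of_skew {T : F → F} (hT : ∀ u w, ⟪T u, w⟫ = -⟪u, T w⟫)
    (u : F) : ⟪u, T u⟫ = 0 := by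
  have h := hT u u
  rw [real_inner_comm] at h
  linarith

theorem abs_inner_le_norm_mul_norm_add_of_inner_eq_zero {u a : F} (b : F) (h : ⟪u, a⟫ = 0) :
    |⟪u, b⟫| ≤ ‖u‖ * ‖b + a‖ := by
  calc |⟪u, b⟫| = |⟪u, b + a⟫| := by rw [inner_add_right, h, add_zero]
    _ ≤ ‖u‖ * ‖b + a‖ := abs_real_inner_le_norm u (b + a)

theorem HasFDerivAt.norm {G : Type*} [NormedAddCommGroup G] [NormedSpace ℝ G] {f : G → F}
    {f' : G →L[ℝ] F} {x : G} (hf : HasFDerivAt f f' x) (h0 : f x ≠ 0) :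
    HasFDerivAt (fun y => ‖f y‖) (‖f x‖⁻¹ • (innerSL ℝ (f x)).comp f') x := by
  have hsqrt := hf.norm_sq.sqrt (pow_ne_zero 2 (norm_ne_zero_iff.2 h0))
  simp only [Real.sqrt_sq (norm_nonneg _)] at hsqrt
  convert hsqrt using 1
  rw [← Nat.cast_smul_eq_nsmul ℝ, smul_smul]
  congr 1
  field_simp
  norm_num

end

theorem diamagnetic_inequality_general
    {F : Type*} [NormedAddCommGroup F] [InnerProductSpace ℝ F]
    {N : ℕ}
    (Ω : Set (EuclideanSpace ℝ (Fin N)))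
    (Γ : EuclideanSpace ℝ (Fin N) → EuclideanSpace ℝ (Fin N) →L[ℝ] F →L[ℝ] F)
    (hskew : ∀ x ∈ Ω, ∀ (v : EuclideanSpace ℝ (Fin N)) (u w : F),
      ⟪(Γ x v) u, w⟫ = -⟪u, (Γ x v) w⟫)
    (U : EuclideanSpace ℝ (Fin N) → F) (x : EuclideanSpace ℝ (Fin N)) (hx : x ∈ Ω)
    (DU : EuclideanSpace ℝ (Fin N) →L[ℝ] F)
    (hU : HasFDerivAt U DU x) :
    (∀ v : EuclideanSpace ℝ (Fin N),
      |⟪U x, DU v⟫| ≤ ‖U x‖ * ‖DU v + (Γ x v) (U x)‖) ∧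
    (U x ≠ 0 → ∃ D' : EuclideanSpace ℝ (Fin N) →L[ℝ] ℝ,
      HasFDerivAt (fun y => ‖U y‖) D' x ∧
      ∀ v : EuclideanSpace ℝ (Fin N), |D' v| ≤ ‖DU v + (Γ x v) (U x)‖) := by
  have hbound (v : EuclideanSpace ℝ (Fin N)) :
      |⟪U x, DU v⟫| ≤ ‖U x‖ * ‖DU v + (Γ x v) (U x)‖ :=
    abs_inner_le_norm_mul_norm_add_of_inner_eq_zero (DU v)
      (inner_self_apply_eq_zero_of_skew (hskew x hx v) (U x))
  refine ⟨hbound, fun hUx => ⟨_, hU.norm hUx, fun v => ?_⟩⟩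
  rw [smul_apply, ContinuousLinearMap.comp_apply, innerSL_apply_apply,
    smul_eq_mul, abs_mul, abs_inv, abs_norm, inv_mul_le_iff₀ (norm_pos_iff.2 hUx)]
  exact hbound v

/-- Pointwise diamagnetic inequality: for a connection form with
skew-adjoint values, `|⟪U(x), DU(x)[v]⟫| ≤ ‖U(x)‖ ‖D_Γ U(x)[v]‖`, and if `U(x) ≠ 0` the
norm `‖U‖` is differentiable at `x` with `|D‖U‖(x)[v]| ≤ ‖D_Γ U(x)[v]‖`. -/
theorem diamagnetic_inequality
    {F : Type*} [NormedAddCommGroup F] [InnerProductSpace ℝ F] [FiniteDimensional ℝ F]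
    {N : ℕ}
    (Ω : Set (EuclideanSpace ℝ (Fin N))) (hΩ : IsOpen Ω)
    (Γ : EuclideanSpace ℝ (Fin N) → EuclideanSpace ℝ (Fin N) →L[ℝ] F →L[ℝ] F)
    (hskew : ∀ x ∈ Ω, ∀ (v : EuclideanSpace ℝ (Fin N)) (u w : F),
      ⟪(Γ x v) u, w⟫ = -⟪u, (Γ x v) w⟫)
    (U : EuclideanSpace ℝ (Fin N) → F) (x : EuclideanSpace ℝ (Fin N)) (hx : x ∈ Ω)
    (DU : EuclideanSpace ℝ (Fin N) →L[ℝ] F)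
    (hU : HasFDerivAt U DU x) :
    (∀ v : EuclideanSpace ℝ (Fin N),
      |⟪U x, DU v⟫| ≤ ‖U x‖ * ‖DU v + (Γ x v) (U x)‖) ∧
    (U x ≠ 0 → ∃ D' : EuclideanSpace ℝ (Fin N) →L[ℝ] ℝ,
      HasFDerivAt (fun y => ‖U y‖) D' x ∧
      ∀ v : EuclideanSpace ℝ (Fin N), |D' v| ≤ ‖DU v + (Γ x v) (U x)‖) :=
  diamagnetic_inequality_general Ω Γ hskew U x hx DU hU
end

section
/- Let F be a finite-dimensional real inner product space, Ω ⊆ ℝ^N open, Γ : Ω → L(ℝ^N, o(F)) a continuous connection form, γ : [0,1] → Ω a C¹ path, and U : Ω → F a C¹ map. Let Q : [0,1] → L(F,F) satisfy Q'(t) = Q(t) ∘ Γ(γ(t))[γ'(t)] for all t ∈ [0,1] and Q(1) = id_F (so Q(t) = Pt^Γ_γ(t)⁻¹). Then U(γ(1)) = Q(0)(U(γ(0))) + ∫₀¹ Q(t)(D_Γ U(γ(t))[γ'(t)]) dt (gauge-covariant fundamental theorem of calculus). -/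
open Set intervalIntegral
open scoped RealInnerProductSpace

/-! Since `Q' = Q ∘ Γ(γ)[γ']`, the product rule shows that `t ↦ Q(t)(D_Γ U(γ t)[γ' t])` is the
derivative of `t ↦ Q(t)(U(γ t))`; the fundamental theorem of calculus and `Q(1) = id` conclude. -/

section GaugeCovariantFTC

variable {E F : Type*} [NormedAddCommGroup E] [NormedSpace ℝ E]
  [NormedAddCommGroup F] [NormedSpace ℝ F] [CompleteSpace F] {a b : ℝ}

theorem integral_eq_sub_of_hasDerivWithinAt_Icc {f f' : ℝ → F} (hab : a ≤ b)
    (hf : ∀ t ∈ Icc a b, HasDerivWithinAt f (f' t) (Icc a b) t)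
    (hf' : ContinuousOn f' (Icc a b)) :
    ∫ t in a..b, f' t = f b - f a := by
  refine integral_eq_sub_of_hasDeriv_right_of_le hab
    (fun t ht => (hf t ht).continuousWithinAt) (fun t ht => ?_)
    (hf'.intervalIntegrable_of_Icc hab)
  exact (hf t (Ioo_subset_Icc_self ht)).mono_of_mem_nhdsWithin
    (Icc_mem_nhdsGT_of_mem ⟨ht.1.le, ht.2⟩)

theorem integral_clm_apply_covariant_deriv_eq_sub {Q : ℝ → E →L[ℝ] F} {A : ℝ → E →L[ℝ] E}
    {u u' : ℝ → E} (hab : a ≤ b)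
    (hQ : ∀ t ∈ Icc a b, HasDerivWithinAt Q ((Q t).comp (A t)) (Icc a b) t)
    (hu : ∀ t ∈ Icc a b, HasDerivWithinAt u (u' t) (Icc a b) t)
    (hA : ContinuousOn A (Icc a b)) (hu' : ContinuousOn u' (Icc a b)) :
    ∫ t in a..b, Q t (u' t + A t (u t)) = Q b (u b) - Q a (u a) := by
  refine integral_eq_sub_of_hasDerivWithinAt_Icc (f := fun t => Q t (u t)) hab (fun t ht => ?_) ?_
  · simpa only [ContinuousLinearMap.comp_apply, map_add, add_comm] using
      (hQ t ht).clm_apply (hu t ht)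
  · have hQcont : ContinuousOn Q (Icc a b) := fun t ht => (hQ t ht).continuousWithinAt
    have hucont : ContinuousOn u (Icc a b) := fun t ht => (hu t ht).continuousWithinAt
    exact hQcont.clm_apply (hu'.add (hA.clm_apply hucont))

end GaugeCovariantFTC

theorem gauge_covariant_ftc_general
    {F : Type*} [NormedAddCommGroup F] [InnerProductSpace ℝ F] [FiniteDimensional ℝ F]
    {N : ℕ}
    (Ω : Set (EuclideanSpace ℝ (Fin N)))
    (Γ : EuclideanSpace ℝ (Fin N) → EuclideanSpace ℝ (Fin N) →L[ℝ] F →L[ℝ] F)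
    (hΓcont : ContinuousOn Γ Ω)
    -- the C¹ path γ
    (γ γ' : ℝ → EuclideanSpace ℝ (Fin N))
    (hγΩ : ∀ t ∈ Icc (0:ℝ) 1, γ t ∈ Ω)
    (hγ : ∀ t ∈ Icc (0:ℝ) 1, HasDerivWithinAt γ (γ' t) (Icc (0:ℝ) 1) t)
    (hγ'cont : ContinuousOn γ' (Icc (0:ℝ) 1))
    -- the C¹ map U with derivative DU
    (U : EuclideanSpace ℝ (Fin N) → F)
    (DU : EuclideanSpace ℝ (Fin N) → EuclideanSpace ℝ (Fin N) →L[ℝ] F)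
    (hU : ∀ x ∈ Ω, HasFDerivAt U (DU x) x)
    (hDUcont : ContinuousOn DU Ω)
    -- the inverse parallel transport Q
    (Q : ℝ → F →L[ℝ] F)
    (hQ : ∀ t ∈ Icc (0:ℝ) 1,
      HasDerivWithinAt Q ((Q t).comp ((Γ (γ t)) (γ' t))) (Icc (0:ℝ) 1) t)
    (hQ1 : Q 1 = ContinuousLinearMap.id ℝ F) :
    U (γ 1) = (Q 0) (U (γ 0)) +
      ∫ t in (0:ℝ)..1, (Q t) ((DU (γ t)) (γ' t) + ((Γ (γ t)) (γ' t)) (U (γ t))) := by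
  have hγcont : ContinuousOn γ (Icc 0 1) := fun t ht => (hγ t ht).continuousWithinAt
  have hUγ : ∀ t ∈ Icc (0:ℝ) 1, HasDerivWithinAt (U ∘ γ) (DU (γ t) (γ' t)) (Icc 0 1) t :=
    fun t ht => (hU (γ t) (hγΩ t ht)).comp_hasDerivWithinAt t (hγ t ht)
  have hFTC := integral_clm_apply_covariant_deriv_eq_sub zero_le_one hQ hUγ
    ((hΓcont.comp hγcont hγΩ).clm_apply hγ'cont) ((hDUcont.comp hγcont hγΩ).clm_apply hγ'cont)
  simp only [Function.comp_apply, hQ1, ContinuousLinearMap.id_apply] at hFTC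
  rw [hFTC]
  abel

/-- Gauge-covariant fundamental theorem of calculus:
`U(γ(1)) = Q(0)(U(γ(0))) + ∫₀¹ Q(t)(D_Γ U(γ(t))[γ'(t)]) dt`, where `Q = (Pt^Γ_γ)⁻¹`
solves `Q' = Q ∘ Γ(γ(t))[γ'(t)]`, `Q(1) = id`. -/
theorem gauge_covariant_ftc
    {F : Type*} [NormedAddCommGroup F] [InnerProductSpace ℝ F] [FiniteDimensional ℝ F]
    {N : ℕ}
    (Ω : Set (EuclideanSpace ℝ (Fin N))) (hΩ : IsOpen Ω)
    (Γ : EuclideanSpace ℝ (Fin N) → EuclideanSpace ℝ (Fin N) →L[ℝ] F →L[ℝ] F)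
    (hΓcont : ContinuousOn Γ Ω)
    (hskew : ∀ x ∈ Ω, ∀ (v : EuclideanSpace ℝ (Fin N)) (u w : F),
      ⟪(Γ x v) u, w⟫ = -⟪u, (Γ x v) w⟫)
    -- the C¹ path γ
    (γ γ' : ℝ → EuclideanSpace ℝ (Fin N))
    (hγΩ : ∀ t ∈ Icc (0:ℝ) 1, γ t ∈ Ω)
    (hγ : ∀ t ∈ Icc (0:ℝ) 1, HasDerivWithinAt γ (γ' t) (Icc (0:ℝ) 1) t)
    (hγ'cont : ContinuousOn γ' (Icc (0:ℝ) 1))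
    -- the C¹ map U with derivative DU
    (U : EuclideanSpace ℝ (Fin N) → F)
    (DU : EuclideanSpace ℝ (Fin N) → EuclideanSpace ℝ (Fin N) →L[ℝ] F)
    (hU : ∀ x ∈ Ω, HasFDerivAt U (DU x) x)
    (hDUcont : ContinuousOn DU Ω)
    -- the inverse parallel transport Q
    (Q : ℝ → F →L[ℝ] F)
    (hQ : ∀ t ∈ Icc (0:ℝ) 1,
      HasDerivWithinAt Q ((Q t).comp ((Γ (γ t)) (γ' t))) (Icc (0:ℝ) 1) t)
    (hQ1 : Q 1 = ContinuousLinearMap.id ℝ F) :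
    U (γ 1) = (Q 0) (U (γ 0)) +
      ∫ t in (0:ℝ)..1, (Q t) ((DU (γ t)) (γ' t) + ((Γ (γ t)) (γ' t)) (U (γ t))) :=
  gauge_covariant_ftc_general Ω Γ hΓcont γ γ' hγΩ hγ hγ'cont U DU hU hDUcont Q hQ hQ1
end

section
/- Let F be a finite-dimensional real inner product space, Ω ⊆ ℝ^N convex, Γ : Ω → L(ℝ^N, o(F)) a continuous connection form, and U : Ω → F a C¹ map. Then for all x, y ∈ Ω: ‖U(x) − R^Γ(x,y)U(y)‖ ≤ ∫₀¹ ‖D_Γ U((1−t)x + ty)[y−x]‖ dt. -/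
open Set intervalIntegral
open scoped RealInnerProductSpace

/-- Gauge-covariant fundamental theorem of calculus, estimate form:
`‖U(x) − R^Γ(x,y)U(y)‖ ≤ ∫₀¹ ‖D_Γ U((1−t)x + ty)[y−x]‖ dt` on a convex set. -/
theorem covariant_ftc_estimate
    {F : Type*} [NormedAddCommGroup F] [InnerProductSpace ℝ F] [FiniteDimensional ℝ F]
    {N : ℕ}
    (Ω : Set (EuclideanSpace ℝ (Fin N))) (hΩ : Convex ℝ Ω)
    (Γ : EuclideanSpace ℝ (Fin N) → EuclideanSpace ℝ (Fin N) →L[ℝ] F →L[ℝ] F)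
    (hΓcont : ContinuousOn Γ Ω)
    (hskew : ∀ w ∈ Ω, ∀ (v : EuclideanSpace ℝ (Fin N)) (u₁ u₂ : F),
      ⟪(Γ w v) u₁, u₂⟫ = -⟪u₁, (Γ w v) u₂⟫)
    -- U of class C¹ on Ω with derivative DU
    (U : EuclideanSpace ℝ (Fin N) → F)
    (DU : EuclideanSpace ℝ (Fin N) → EuclideanSpace ℝ (Fin N) →L[ℝ] F)
    (hU : ∀ w ∈ Ω, HasFDerivWithinAt U (DU w) Ω w)
    (hDUcont : ContinuousOn DU Ω)
    -- the two points and the parallel transport R^Γ(x,y) = P 0 along the segment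
    (x y : EuclideanSpace ℝ (Fin N)) (hx : x ∈ Ω) (hy : y ∈ Ω)
    (P : ℝ → F →L[ℝ] F)
    (hP : ∀ t ∈ Icc (0:ℝ) 1, HasDerivWithinAt P
      (-((Γ ((1 - t) • x + t • y)) (y - x)).comp (P t)) (Icc (0:ℝ) 1) t)
    (hP1 : P 1 = ContinuousLinearMap.id ℝ F) :
    ‖U x - (P 0) (U y)‖
      ≤ ∫ t in (0:ℝ)..1,
          ‖(DU ((1 - t) • x + t • y)) (y - x)
            + ((Γ ((1 - t) • x + t • y)) (y - x)) (U ((1 - t) • x + t • y))‖ := by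
  -- notation
  set γ : ℝ → EuclideanSpace ℝ (Fin N) := fun t => (1 - t) • x + t • y with hγdef
  have hmem : ∀ t ∈ Icc (0:ℝ) 1, γ t ∈ Ω := fun t ht =>
    hΩ hx hy (by linarith [ht.2]) ht.1 (by ring)
  have hmaps : MapsTo γ (Icc (0:ℝ) 1) Ω := fun t ht => hmem t ht
  -- derivative of γ
  have hγd : ∀ t : ℝ, HasDerivWithinAt γ (y - x) (Icc (0:ℝ) 1) t := by
    intro t
    have h1 : HasDerivWithinAt (fun s : ℝ => (1 - s) • x + s • y)
        ((-1 : ℝ) • x + (1 : ℝ) • y) (Icc (0:ℝ) 1) t :=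
      ((((hasDerivWithinAt_id t _).const_sub 1).smul_const x)).add
        ((hasDerivWithinAt_id t _).smul_const y)
    convert h1 using 1
    module
  have hγcont : ContinuousOn γ (Icc (0:ℝ) 1) := fun t ht => (hγd t).continuousWithinAt
  -- derivative of U ∘ γ
  have hUγ : ∀ t ∈ Icc (0:ℝ) 1,
      HasDerivWithinAt (fun s => U (γ s)) (DU (γ t) (y - x)) (Icc (0:ℝ) 1) t := fun t ht =>
    (hU (γ t) (hmem t ht)).comp_hasDerivWithinAt t (hγd t) hmaps
  -- derivative of t ↦ P t w for fixed w
  have hPw : ∀ (w : F), ∀ t ∈ Icc (0:ℝ) 1,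
      HasDerivWithinAt (fun s => P s w) (-((Γ (γ t)) (y - x)) (P t w)) (Icc (0:ℝ) 1) t := by
    intro w t ht
    have := (hP t ht).clm_apply (hasDerivWithinAt_const t _ w)
    simpa using this
  have hPcont : ContinuousOn P (Icc (0:ℝ) 1) := fun t ht => (hP t ht).continuousWithinAt
  have hPwcont : ∀ w : F, ContinuousOn (fun s => P s w) (Icc (0:ℝ) 1) := fun w =>
    hPcont.clm_apply continuousOn_const
  -- norm preservation of P t
  have hPnorm : ∀ t ∈ Icc (0:ℝ) 1, ∀ w : F, ‖P t w‖ = ‖w‖ := by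
    intro t ht w
    set n : ℝ → ℝ := fun s => ⟪P s w, P s w⟫ with hn
    have hnd : ∀ s ∈ Icc (0:ℝ) 1, HasDerivWithinAt n 0 (Icc (0:ℝ) 1) s := by
      intro s hs
      have h := (hPw w s hs).inner ℝ (hPw w s hs)
      have hz : ⟪P s w, -((Γ (γ s)) (y - x)) (P s w)⟫
          + ⟪-((Γ (γ s)) (y - x)) (P s w), P s w⟫ = 0 := by
        rw [inner_neg_right, inner_neg_left, hskew (γ s) (hmem s hs)]
        ring
      rwa [hz] at h
    have hncont : ContinuousOn n (Icc (0:ℝ) 1) := fun s hs => (hnd s hs).continuousWithinAt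
    have hconst : ∀ s ∈ Icc (0:ℝ) 1, n s = n 0 :=
      constant_of_has_deriv_right_zero hncont (fun s hs =>
        (hnd s (Ico_subset_Icc_self hs)).mono_of_mem_nhdsWithin (Icc_mem_nhdsGE_of_mem hs))
    have h01 : n t = n 1 := by rw [hconst t ht, ← hconst 1 (right_mem_Icc.mpr zero_le_one)]
    have : ⟪P t w, P t w⟫ = ⟪w, w⟫ := by simpa [hn, hP1] using h01
    rw [real_inner_self_eq_norm_sq, real_inner_self_eq_norm_sq] at this
    nlinarith [norm_nonneg (P t w), norm_nonneg w]
  have h0mem : (0:ℝ) ∈ Icc (0:ℝ) 1 := left_mem_Icc.mpr zero_le_one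
  -- inner-product preservation of P 0 (polarization)
  have hP0inner : ∀ a b : F, ⟪P 0 a, P 0 b⟫ = ⟪a, b⟫ := by
    intro a b
    have hab : ‖P 0 a + P 0 b‖ = ‖a + b‖ := by
      rw [← (P 0).map_add]; exact hPnorm 0 h0mem _
    have h1 := norm_add_sq_real (P 0 a) (P 0 b)
    have h2 := norm_add_sq_real a b
    rw [hab, hPnorm 0 h0mem a, hPnorm 0 h0mem b] at h1
    linarith
  -- surjectivity of P 0
  have hsurj : Function.Surjective (P 0) := by
    have hinj : Function.Injective ((P 0 : F →L[ℝ] F) : F →ₗ[ℝ] F) := by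
      intro a b hab
      have : ‖P 0 (a - b)‖ = ‖a - b‖ := hPnorm 0 h0mem _
      rw [(P 0).map_sub] at this
      have : ‖a - b‖ = 0 := by
        rw [← this]
        simpa using congrArg (fun z => ‖z - P 0 b‖) hab
      rwa [norm_sub_eq_zero_iff] at this
    exact (LinearMap.injective_iff_surjective).mp hinj
  set d : F := U x - P 0 (U y) with hd
  obtain ⟨w, hw⟩ := hsurj d
  -- the auxiliary scalar function and its derivative
  set v : ℝ → F := fun t => DU (γ t) (y - x) + ((Γ (γ t)) (y - x)) (U (γ t)) with hv
  set ψ : ℝ → ℝ := fun t => ⟪P t w, U (γ t)⟫ with hψ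
  have hψd : ∀ t ∈ Icc (0:ℝ) 1,
      HasDerivWithinAt ψ (⟪P t w, v t⟫) (Icc (0:ℝ) 1) t := by
    intro t ht
    have h := (hPw w t ht).inner ℝ (hUγ t ht)
    have hval : ⟪P t w, DU (γ t) (y - x)⟫ + ⟪-((Γ (γ t)) (y - x)) (P t w), U (γ t)⟫
        = ⟪P t w, v t⟫ := by
      rw [inner_neg_left, hskew (γ t) (hmem t ht), hv]
      simp only [inner_add_right]
      ring
    rwa [hval] at h
  -- continuity of v and the derivative of ψ
  have hUcont : ContinuousOn U Ω := fun z hz => (hU z hz).continuousWithinAt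
  have hvcont : ContinuousOn v (Icc (0:ℝ) 1) := by
    apply ContinuousOn.add
    · exact (hDUcont.comp hγcont hmaps).clm_apply continuousOn_const
    · exact ((hΓcont.comp hγcont hmaps).clm_apply continuousOn_const).clm_apply
        (hUcont.comp hγcont hmaps)
  have hψ'cont : ContinuousOn (fun t => ⟪P t w, v t⟫) (Icc (0:ℝ) 1) :=
    (hPwcont w).inner hvcont
  have huIcc : uIcc (0:ℝ) 1 = Icc (0:ℝ) 1 := uIcc_of_le zero_le_one
  have hψ'int : IntervalIntegrable (fun t => ⟪P t w, v t⟫) MeasureTheory.volume 0 1 :=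
    (hψ'cont.mono (by rw [huIcc])).intervalIntegrable
  have hvnint : IntervalIntegrable (fun t => ‖v t‖) MeasureTheory.volume 0 1 :=
    (hvcont.norm.mono (by rw [huIcc])).intervalIntegrable
  -- FTC
  have hftc : ∫ t in (0:ℝ)..1, ⟪P t w, v t⟫ = ψ 1 - ψ 0 := by
    apply integral_eq_sub_of_hasDeriv_right_of_le zero_le_one
      (fun t ht => (hψd t ht).continuousWithinAt)
      (fun t ht => ((hψd t (Ioo_subset_Icc_self ht)).hasDerivAt
        (Icc_mem_nhds ht.1 ht.2)).hasDerivWithinAt) hψ'int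
  -- endpoint values
  have hγ0 : γ 0 = x := by simp [hγdef]
  have hγ1 : γ 1 = y := by simp [hγdef]
  have hψ0 : ψ 0 = ⟪d, U x⟫ := by simp only [hψ, hγ0, hw]
  have hψ1 : ψ 1 = ⟪d, P 0 (U y)⟫ := by
    simp only [hψ, hγ1, hP1, ContinuousLinearMap.id_apply]
    rw [← hw, hP0inner]
  have hdsq : ‖d‖ ^ 2 = ψ 0 - ψ 1 := by
    rw [hψ0, hψ1, ← inner_sub_right, ← hd, real_inner_self_eq_norm_sq]
  -- the chain of estimates
  have hwd : ‖w‖ = ‖d‖ := by rw [← hw, hPnorm 0 h0mem]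
  have hbound : ∫ t in (0:ℝ)..1, |⟪P t w, v t⟫| ≤ ∫ t in (0:ℝ)..1, ‖d‖ * ‖v t‖ := by
    apply integral_mono_on zero_le_one
      ((hψ'cont.abs.mono (by rw [huIcc])).intervalIntegrable) (hvnint.const_mul _)
    intro t ht
    calc |⟪P t w, v t⟫| ≤ ‖P t w‖ * ‖v t‖ := abs_real_inner_le_norm _ _
      _ = ‖d‖ * ‖v t‖ := by rw [hPnorm t ht, hwd]
  have hkey : ‖d‖ ^ 2 ≤ ‖d‖ * ∫ t in (0:ℝ)..1, ‖v t‖ := by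
    calc ‖d‖ ^ 2 = ψ 0 - ψ 1 := hdsq
      _ ≤ |ψ 1 - ψ 0| := by rw [abs_sub_comm]; exact le_abs_self _
      _ = |∫ t in (0:ℝ)..1, ⟪P t w, v t⟫| := by rw [hftc]
      _ ≤ ∫ t in (0:ℝ)..1, |⟪P t w, v t⟫| := abs_integral_le_integral_abs zero_le_one
      _ ≤ ∫ t in (0:ℝ)..1, ‖d‖ * ‖v t‖ := hbound
      _ = ‖d‖ * ∫ t in (0:ℝ)..1, ‖v t‖ := by
          rw [← intervalIntegral.integral_const_mul]
  have hgoal : ‖d‖ ≤ ∫ t in (0:ℝ)..1, ‖v t‖ := by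
    rcases eq_or_lt_of_le (norm_nonneg d) with h0 | hpos
    · rw [← h0]
      exact intervalIntegral.integral_nonneg zero_le_one (fun t _ => norm_nonneg _)
    · nlinarith [hkey]
  exact hgoal
end
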